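/- arXiv:2502.14341 — 9 statements merged into one kernel-verified Lean document; each statement's English description precedes it below -/
import Mathlib

section
/- Let G be a k-fold cover of a graph F with at least one vertex. Then γ(G) ≥ k. -/
/-- `π` is a covering projection from `G` onto `F`: it is surjective and maps the
neighbourhood of each vertex `v` of `G` bijectively onto the neighbourhood of `π v` in `F`. -/
def IsCover {V W : Type*} (G : SimpleGraph V) (F : SimpleGraph W) (π : V → W) : Prop :=
  Function.Surjective π ∧ ∀ v : V, Set.BijOn π (G.neighborSet v) (F.neighborSet (π v))

/-- The covering projection `π` is `k`-fold: every fiber has exactly `k` elements. -/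
def IsKFold {V W : Type*} (π : V → W) (k : ℕ) : Prop :=
  ∀ u : W, Nat.card (π ⁻¹' {u}) = k

/-- `S` is a dominating set of `F`. -/
def IsDominatingSet {V : Type*} (F : SimpleGraph V) (S : Set V) : Prop :=
  ∀ v ∉ S, ∃ u ∈ S, F.Adj v u

/-- The domination number `γ(F)`. -/
noncomputable def dominationNumber {V : Type*} (F : SimpleGraph V) : ℕ :=
  sInf {n | ∃ S : Set V, IsDominatingSet F S ∧ S.ncard = n}

/-- `S` is a total dominating set of `F`. -/
def IsTotalDominatingSet {V : Type*} (F : SimpleGraph V) (S : Set V) : Prop :=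
  ∀ v : V, ∃ u ∈ S, F.Adj v u

/-- The total domination number `γ_t(F)`. -/
noncomputable def totalDominationNumber {V : Type*} (F : SimpleGraph V) : ℕ :=
  sInf {n | ∃ S : Set V, IsTotalDominatingSet F S ∧ S.ncard = n}

/-- `S` is a connected dominating set of `F`. -/
def IsConnDominatingSet {V : Type*} (F : SimpleGraph V) (S : Set V) : Prop :=
  IsDominatingSet F S ∧ (F.induce S).Connected

/-- The connected domination number `γ_c(F)`. -/
noncomputable def connectedDominationNumber {V : Type*} (F : SimpleGraph V) : ℕ :=
  sInf {n | ∃ S : Set V, IsConnDominatingSet F S ∧ S.ncard = n}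

/-- If `G` is a `k`-fold cover of a graph `F` with at least one vertex, then `γ(G) ≥ k`. -/
theorem dominationNumber_ge_fold {V W : Type*} [Fintype V] [Fintype W] [Nonempty W]
    (G : SimpleGraph V) (F : SimpleGraph W) (π : V → W) (k : ℕ)
    (hπ : IsCover G F π) (hk : IsKFold π k) :
    k ≤ dominationNumber G := by
  classical
  obtain ⟨hsurj, hbij⟩ := hπ
  have hmem : dominationNumber G ∈ {n | ∃ S : Set V, IsDominatingSet G S ∧ S.ncard = n} := by
    apply Nat.sInf_mem
    exact ⟨(Set.univ : Set V).ncard, Set.univ,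
      fun v hv => absurd (Set.mem_univ v) hv, rfl⟩
  obtain ⟨S, hS, hcard⟩ := hmem
  obtain ⟨u⟩ := ‹Nonempty W›
  have hdom : ∀ v : V, v ∈ π ⁻¹' {u} → ∃ s, s ∈ S ∧ (v = s ∨ G.Adj v s) := by
    intro v _
    by_cases hv : v ∈ S
    · exact ⟨v, hv, Or.inl rfl⟩
    · obtain ⟨s, hs, hadj⟩ := hS v hv
      exact ⟨s, hs, Or.inr hadj⟩
  choose f hfS hf using hdom
  -- key injectivity
  have hinj : ∀ (v : V) (hv : v ∈ π ⁻¹' {u}) (v' : V) (hv' : v' ∈ π ⁻¹' {u}), f v hv = f v' hv' → v = v' := by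
    intro v hv v' hv' heq
    have huv : π v = u := hv
    have huv' : π v' = u := hv'
    rcases hf v hv with h1 | h1 <;> rcases hf v' hv' with h2 | h2
    · rw [h1, h2, heq]
    · -- v = f v, v' adjacent to f v' = f v = v
      exfalso
      have hadj : G.Adj v v' := by
        have : G.Adj v' v := by rw [h1, heq]; exact h2
        exact this.symm
      have : π v' ∈ F.neighborSet (π v) := (hbij v).mapsTo hadj
      rw [huv, huv'] at this
      exact F.irrefl this
    · exfalso
      have hadj : G.Adj v' v := by
        have : G.Adj v v' := by rw [h2, ← heq]; exact h1
        exact this.symm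
      have : π v ∈ F.neighborSet (π v') := (hbij v').mapsTo hadj
      rw [huv, huv'] at this
      exact F.irrefl this
    · -- both adjacent to s := f v = f v'
      have h2' : G.Adj v' (f v hv) := by rw [heq]; exact h2
      have hv1 : v ∈ G.neighborSet (f v hv) := h1.symm
      have hv2 : v' ∈ G.neighborSet (f v hv) := h2'.symm
      exact (hbij (f v hv)).injOn hv1 hv2 (by rw [huv, huv'])
  -- build injection from fiber into S
  let g : (π ⁻¹' {u}) → S := fun v => ⟨f v v.2, hfS v v.2⟩
  have hg : Function.Injective g := by
    intro a b hab
    exact Subtype.ext (hinj a a.2 b b.2 (by simpa [g] using congrArg Subtype.val hab))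
  have := Nat.card_le_card_of_injective g hg
  rw [hk u] at this
  rwa [Nat.card_coe_set_eq, hcard] at this
end

section
/- Let G be a k-fold cover of a graph F with at least one vertex. Then γ(G) ≥ √(k·γ(F)), i.e., γ(G)² ≥ k·γ(F). -/
/-- If `G` is a `k`-fold cover of a graph `F` with at least one vertex, then
`γ(G)² ≥ k·γ(F)`. -/
theorem sq_dominationNumber_ge {V W : Type*} [Fintype V] [Fintype W] [Nonempty W]
    (G : SimpleGraph V) (F : SimpleGraph W) (π : V → W) (k : ℕ)
    (hπ : IsCover G F π) (hk : IsKFold π k) :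
    k * dominationNumber F ≤ (dominationNumber G) ^ 2 := by
  classical
  -- obtain a minimum dominating set D of G
  have hne : (dominationNumber G) ∈ {n | ∃ S : Set V, IsDominatingSet G S ∧ S.ncard = n} := by
    apply Nat.sInf_mem
    exact ⟨(Set.univ : Set V).ncard, Set.univ, fun v hv => absurd (Set.mem_univ v) hv, rfl⟩
  obtain ⟨D, hD, hDcard⟩ := hne
  -- γ(F) ≤ γ(G)
  have h1 : dominationNumber F ≤ dominationNumber G := by
    have himg : IsDominatingSet F (π '' D) := by
      intro w hw
      obtain ⟨v, hv⟩ := hπ.1 w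
      have hvD : v ∉ D := fun h => hw ⟨v, h, hv⟩
      obtain ⟨d, hdD, hadj⟩ := hD v hvD
      refine ⟨π d, ⟨d, hdD, rfl⟩, ?_⟩
      have : π d ∈ F.neighborSet (π v) := (hπ.2 v).mapsTo hadj
      rwa [hv] at this
    calc dominationNumber F ≤ (π '' D).ncard :=
          Nat.sInf_le ⟨π '' D, himg, rfl⟩
      _ ≤ D.ncard := Set.ncard_image_le D.toFinite
      _ = dominationNumber G := hDcard
  -- k ≤ γ(G)
  have h2 : k ≤ dominationNumber G := by
    obtain ⟨u⟩ := ‹Nonempty W›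
    -- map each fiber element to a dominator in D
    set f : V → V := fun x => if h : x ∈ D then x else (hD x h).choose with hf
    have hfD : ∀ x, f x ∈ D := by
      intro x
      by_cases h : x ∈ D
      · simp [hf, h]
      · simp only [hf, h, dif_neg, not_false_iff]
        exact (hD x h).choose_spec.1
    have hfadj : ∀ x, x ∉ D → G.Adj x (f x) := by
      intro x h
      simp only [hf, h, dif_neg, not_false_iff]
      exact (hD x h).choose_spec.2
    have hinj : Set.InjOn f (π ⁻¹' {u}) := by
      intro x hx y hy hxy
      by_contra hne
      have hxu : π x = u := hx
      have hyu : π y = u := hy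
      by_cases hxD : x ∈ D <;> by_cases hyD : y ∈ D
      · simp [hf, hxD, hyD] at hxy; exact hne hxy
      · -- f x = x, f y adjacent to y
        have hfx : f x = x := by simp [hf, hxD]
        have hadj : G.Adj y (f y) := hfadj y hyD
        rw [← hxy, hfx] at hadj
        have : π x ∈ F.neighborSet (π y) := (hπ.2 y).mapsTo hadj
        rw [hxu, hyu] at this
        exact F.irrefl this
      · have hfy : f y = y := by simp [hf, hyD]
        have hadj : G.Adj x (f x) := hfadj x hxD
        rw [hxy, hfy] at hadj
        have : π y ∈ F.neighborSet (π x) := (hπ.2 x).mapsTo hadj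
        rw [hxu, hyu] at this
        exact F.irrefl this
      · have hax : G.Adj x (f x) := hfadj x hxD
        have hay : G.Adj y (f y) := hfadj y hyD
        have hx' : x ∈ G.neighborSet (f x) := hax.symm
        have hy' : y ∈ G.neighborSet (f x) := by rw [hxy]; exact hay.symm
        have : π x = π y := by rw [hxu, hyu]
        exact hne ((hπ.2 (f x)).injOn hx' hy' this)
    have : (π ⁻¹' {u}).ncard ≤ D.ncard :=
      Set.ncard_le_ncard_of_injOn f (fun x _ => hfD x) hinj D.toFinite
    calc k = Nat.card (π ⁻¹' {u}) := (hk u).symm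
      _ = (π ⁻¹' {u}).ncard := (Nat.card_coe_set_eq _)
      _ ≤ D.ncard := this
      _ = dominationNumber G := hDcard
  calc k * dominationNumber F ≤ dominationNumber G * dominationNumber G :=
        Nat.mul_le_mul h2 h1
    _ = (dominationNumber G) ^ 2 := (sq _).symm
end

section
/- Let n ≥ 3 and let G be a k-fold cover of the cycle graph C_n. Then γ(G) ≥ (2/3)·k·γ(C_n), i.e., 3·γ(G) ≥ 2·k·γ(C_n). -/
/-! Every vertex of a `k`-fold cover `G` of `C_n` has degree 2, so each vertex of a dominating set
dominates at most three of the `k n` vertices of `G`, and `3 γ(G) ≥ k n`. On the other hand the even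
vertices `0, 2, …, 2 (⌊n/2⌋ - 1)` dominate `C_n`, so `2 γ(C_n) ≤ n`. -/

open SimpleGraph

section Domination

variable {V : Type*} (G : SimpleGraph V)

lemma isDominatingSet_univ : IsDominatingSet G Set.univ :=
  fun _ hv ↦ absurd (Set.mem_univ _) hv

lemma exists_isDominatingSet_ncard_eq_dominationNumber :
    ∃ S, IsDominatingSet G S ∧ S.ncard = dominationNumber G :=
  Nat.sInf_mem (s := {n | ∃ S : Set V, IsDominatingSet G S ∧ S.ncard = n})
    ⟨_, Set.univ, isDominatingSet_univ G, rfl⟩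

variable {G}

lemma IsDominatingSet.dominationNumber_le {S : Set V} (hS : IsDominatingSet G S) :
    dominationNumber G ≤ S.ncard :=
  Nat.sInf_le ⟨S, hS, rfl⟩

lemma IsDominatingSet.card_le_mul_ncard [Fintype V] [DecidableRel G.Adj] {d : ℕ}
    (hdeg : ∀ v, G.degree v ≤ d) {S : Set V} (hS : IsDominatingSet G S) :
    Fintype.card V ≤ (d + 1) * S.ncard := by
  classical
  have hcover : Finset.univ ⊆ S.toFinset.biUnion fun s ↦ insert s (G.neighborFinset s) := by
    intro v _
    simp only [Finset.mem_biUnion, Set.mem_toFinset, Finset.mem_insert, mem_neighborFinset]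
    by_cases hv : v ∈ S
    · exact ⟨v, hv, .inl rfl⟩
    · obtain ⟨u, hu, huv⟩ := hS v hv
      exact ⟨u, hu, .inr huv.symm⟩
  calc Fintype.card V ≤ ∑ s ∈ S.toFinset, (insert s (G.neighborFinset s)).card :=
        (Finset.card_le_card hcover).trans Finset.card_biUnion_le
    _ ≤ ∑ s ∈ S.toFinset, (d + 1) :=
        Finset.sum_le_sum fun s _ ↦ (Finset.card_insert_le _ _).trans (by simpa using hdeg s)
    _ = (d + 1) * S.ncard := by
        rw [Finset.sum_const, smul_eq_mul, mul_comm, Set.ncard_eq_toFinset_card']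

lemma card_le_mul_dominationNumber [Fintype V] [DecidableRel G.Adj] {d : ℕ}
    (hdeg : ∀ v, G.degree v ≤ d) : Fintype.card V ≤ (d + 1) * dominationNumber G := by
  obtain ⟨S, hS, hcard⟩ := exists_isDominatingSet_ncard_eq_dominationNumber G
  exact hcard ▸ hS.card_le_mul_ncard hdeg

end Domination

lemma IsCover.degree_eq {V W : Type*} {G : SimpleGraph V} {F : SimpleGraph W} {π : V → W}
    (hπ : IsCover G F π) (v : V) [Fintype (G.neighborSet v)] [Fintype (F.neighborSet (π v))] :
    G.degree v = F.degree (π v) := by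
  rw [← card_neighborSet_eq_degree, ← card_neighborSet_eq_degree]
  exact Fintype.card_congr ((hπ.2 v).equiv π)

lemma IsKFold.card_eq {V W : Type*} [Finite V] [Fintype W] {π : V → W} {k : ℕ}
    (hk : IsKFold π k) : Nat.card V = k * Fintype.card W := by
  rw [← Nat.card_congr (Equiv.sigmaFiberEquiv π), Nat.card_sigma]
  calc ∑ u, Nat.card {x // π x = u} = ∑ _u : W, k := Finset.sum_congr rfl fun u _ ↦ hk u
    _ = k * Fintype.card W := by rw [Finset.sum_const, Finset.card_univ, smul_eq_mul, mul_comm]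

lemma cycleGraph_adj_add_one {n : ℕ} (v : Fin (n + 2)) : (cycleGraph (n + 2)).Adj v (v + 1) :=
  cycleGraph_adj.2 (.inr (add_sub_cancel_left v 1))

lemma dominationNumber_cycleGraph_le {n : ℕ} (hn : 2 ≤ n) :
    2 * dominationNumber (cycleGraph n) ≤ n := by
  obtain ⟨m, rfl⟩ : ∃ m, n = m + 2 := ⟨n - 2, by omega⟩
  -- When `n` is odd this omits the last vertex, which `0` dominates across the closing edge.
  let even : Fin ((m + 2) / 2) → Fin (m + 2) := fun j ↦ ⟨2 * j, by omega⟩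
  have heven_inj : Function.Injective even := fun i j h ↦ by
    simp only [even, Fin.mk.injEq] at h
    omega
  suffices hdom : IsDominatingSet (cycleGraph (m + 2)) (Set.range even) by
    have := hdom.dominationNumber_le
    rw [Set.ncard_range_of_injective heven_inj, Nat.card_fin] at this
    omega
  intro v hv
  obtain ⟨j, hj | hj⟩ := Nat.even_or_odd' v.val
  · have hlast : v.val = m + 1 := by
      by_contra hne
      exact hv ⟨⟨j, by omega⟩, Fin.ext (by simp only [even]; omega)⟩
    refine ⟨even ⟨0, by omega⟩, Set.mem_range_self _, ?_⟩
    have : v + 1 = even ⟨0, by omega⟩ := Fin.ext <| by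
      simp only [even, Fin.val_add, Fin.val_one, hlast]
      exact Nat.mod_self _
    exact this ▸ cycleGraph_adj_add_one v
  · refine ⟨even ⟨j, by omega⟩, Set.mem_range_self _, ?_⟩
    have : even ⟨j, by omega⟩ + 1 = v := Fin.ext <| by
      simp only [even, Fin.val_add, Fin.val_one, hj]
      exact Nat.mod_eq_of_lt (by omega)
    exact (this ▸ cycleGraph_adj_add_one _).symm

/-- If `G` is a `k`-fold cover of the cycle `C_n` (`n ≥ 3`), then
`3·γ(G) ≥ 2·k·γ(C_n)`. -/
theorem dominationNumber_cycle_cover {V : Type*} [Fintype V] (n : ℕ) (hn : 3 ≤ n)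
    (G : SimpleGraph V) (π : V → Fin n) (k : ℕ)
    (hπ : IsCover G (SimpleGraph.cycleGraph n) π) (hk : IsKFold π k) :
    2 * k * dominationNumber (SimpleGraph.cycleGraph n) ≤ 3 * dominationNumber G := by
  classical
  obtain ⟨m, rfl⟩ : ∃ m, n = m + 3 := ⟨n - 3, by omega⟩
  have hdeg : ∀ v, G.degree v ≤ 2 := fun v ↦
    (hπ.degree_eq v).trans_le cycleGraph_degree_three_le.le
  calc 2 * k * dominationNumber (cycleGraph (m + 3))
      = k * (2 * dominationNumber (cycleGraph (m + 3))) := by ring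
    _ ≤ k * (m + 3) := Nat.mul_le_mul_left k (dominationNumber_cycleGraph_le (by omega))
    _ = Fintype.card V := by rw [← Nat.card_eq_fintype_card, hk.card_eq, Fintype.card_fin]
    _ ≤ 3 * dominationNumber G := card_le_mul_dominationNumber hdeg
end

section
/- Let F be a graph without isolated vertices and let G be a k-fold cover of F. Then γ_t(G) ≤ k·γ_t(F). -/
/-- If `F` has no isolated vertices and `G` is a `k`-fold cover of `F`, then
`γ_t(G) ≤ k·γ_t(F)`. -/
theorem totalDominationNumber_le_of_isCover {V W : Type*} [Fintype V] [Fintype W]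
    (G : SimpleGraph V) (F : SimpleGraph W) (π : V → W) (k : ℕ)
    (hiso : ∀ u : W, ∃ w : W, F.Adj u w)
    (hπ : IsCover G F π) (hk : IsKFold π k) :
    totalDominationNumber G ≤ k * totalDominationNumber F := by
  classical
  -- the defining set for F is nonempty
  have hne : {n | ∃ S : Set W, IsTotalDominatingSet F S ∧ S.ncard = n}.Nonempty := by
    refine ⟨(Set.univ : Set W).ncard, Set.univ, ?_, rfl⟩
    intro v
    obtain ⟨w, hw⟩ := hiso v
    exact ⟨w, Set.mem_univ w, hw⟩
  have hmem := Nat.sInf_mem hne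
  obtain ⟨S, hS, hScard⟩ := hmem
  -- the preimage of S is a total dominating set of G
  have hdom : IsTotalDominatingSet G (π ⁻¹' S) := by
    intro v
    obtain ⟨u, huS, hadj⟩ := hS (π v)
    have hu : u ∈ F.neighborSet (π v) := hadj
    obtain ⟨w, hw, hwu⟩ := (hπ.2 v).2.2 hu
    exact ⟨w, by simp [Set.mem_preimage, hwu, huS], hw⟩
  -- cardinality of the preimage
  have hcard : (π ⁻¹' S).ncard = k * S.ncard := by
    have : (π ⁻¹' S).toFinset = S.toFinset.biUnion (fun u => (π ⁻¹' {u}).toFinset) := by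
      ext v
      simp [Set.mem_toFinset]
    rw [Set.ncard_eq_toFinset_card', this, Finset.card_biUnion]
    · rw [Set.ncard_eq_toFinset_card', Finset.sum_congr rfl
        (fun u _ => ?_), Finset.sum_const, smul_eq_mul, mul_comm]
      rw [← Set.ncard_eq_toFinset_card', ← Nat.card_coe_set_eq, hk u]
    · intro a _ b _ hab
      simp only [Finset.disjoint_left, Set.mem_toFinset, Set.mem_preimage,
        Set.mem_singleton_iff]
      rintro x rfl h
      exact hab h
  calc totalDominationNumber G ≤ (π ⁻¹' S).ncard :=
        Nat.sInf_le ⟨π ⁻¹' S, hdom, rfl⟩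
    _ = k * totalDominationNumber F := by rw [hcard, hScard]; rfl
end

section
/- Let F be a graph without isolated vertices, let G be a cover of F with covering projection π : V(G) → V(F), and let S be a total dominating set of G. Then the image π(S) is a total dominating set of F; consequently, γ_t(G) ≥ γ_t(F). -/
/-- The image of a total dominating set under a covering projection is a total dominating
set; consequently `γ_t(G) ≥ γ_t(F)`. -/
theorem image_totalDominating_of_isCover {V W : Type*} [Fintype V] [Fintype W]
    (G : SimpleGraph V) (F : SimpleGraph W) (π : V → W)
    (hiso : ∀ u : W, ∃ w : W, F.Adj u w)
    (hπ : IsCover G F π) :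
    (∀ S : Set V, IsTotalDominatingSet G S → IsTotalDominatingSet F (π '' S)) ∧
      totalDominationNumber F ≤ totalDominationNumber G := by
  obtain ⟨hsurj, hbij⟩ := hπ
  have himg : ∀ S : Set V, IsTotalDominatingSet G S → IsTotalDominatingSet F (π '' S) := by
    intro S hS w
    obtain ⟨v, rfl⟩ := hsurj w
    obtain ⟨u, huS, huv⟩ := hS v
    exact ⟨π u, ⟨u, huS, rfl⟩, (hbij v).mapsTo huv⟩
  refine ⟨himg, ?_⟩
  -- G has no isolated vertices, so Set.univ is a total dominating set of G
  have hGtds : IsTotalDominatingSet G (Set.univ : Set V) := by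
    intro v
    obtain ⟨w, hw⟩ := hiso (π v)
    obtain ⟨u, hu, rfl⟩ := (hbij v).surjOn hw
    exact ⟨u, Set.mem_univ u, hu⟩
  have hne : {n | ∃ S : Set V, IsTotalDominatingSet G S ∧ S.ncard = n}.Nonempty :=
    ⟨(Set.univ : Set V).ncard, Set.univ, hGtds, rfl⟩
  obtain ⟨S, hS, hcard⟩ := Nat.sInf_mem hne
  have h1 : totalDominationNumber F ≤ (π '' S).ncard :=
    Nat.sInf_le ⟨π '' S, himg S hS, rfl⟩
  have h2 : (π '' S).ncard ≤ S.ncard :=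
    Set.ncard_image_le S.toFinite
  calc totalDominationNumber F ≤ (π '' S).ncard := h1
    _ ≤ S.ncard := h2
    _ = totalDominationNumber G := hcard
end

section
/- Let F be a graph without isolated vertices and with at least one vertex, and let G be a k-fold cover of F. Then γ_t(G) ≥ k. -/
/-- If `F` has no isolated vertices and at least one vertex, and `G` is a `k`-fold
cover of `F`, then `γ_t(G) ≥ k`. -/
theorem totalDominationNumber_ge_fold {V W : Type*} [Fintype V] [Fintype W] [Nonempty W]
    (G : SimpleGraph V) (F : SimpleGraph W) (π : V → W) (k : ℕ)
    (hiso : ∀ u : W, ∃ w : W, F.Adj u w)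
    (hπ : IsCover G F π) (hk : IsKFold π k) :
    k ≤ totalDominationNumber G := by
  obtain ⟨hsurj, hbij⟩ := hπ
  -- G has no isolated vertices
  have hGiso : ∀ v : V, ∃ x : V, G.Adj v x := by
    intro v
    obtain ⟨w, hw⟩ := hiso (π v)
    have : w ∈ F.neighborSet (π v) := hw
    obtain ⟨x, hx, _⟩ := (hbij v).2.2 this
    exact ⟨x, hx⟩
  apply le_csInf
  · refine ⟨Fintype.card V, Set.univ, ?_, by simp [Set.ncard_univ, Nat.card_eq_fintype_card]⟩
    intro v
    obtain ⟨x, hx⟩ := hGiso v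
    exact ⟨x, Set.mem_univ x, hx⟩
  · rintro n ⟨S, hS, rfl⟩
    obtain ⟨u⟩ := ‹Nonempty W›
    rw [← hk u]
    -- each vertex in the fiber has a dominator; pick one via choice
    choose f hfS hfadj using fun v : π ⁻¹' {u} => hS v
    have hinj : Function.Injective f := by
      intro v v' hvv'
      have h1 : (v : V) ∈ G.neighborSet (f v) := (G.adj_symm (hfadj v))
      have h2 : (v' : V) ∈ G.neighborSet (f v) := hvv' ▸ (G.adj_symm (hfadj v'))
      have hπv : π v = π v' := by
        have := v.2; have := v'.2
        simp only [Set.mem_preimage, Set.mem_singleton_iff] at *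
        rw [v.2, v'.2]
      exact Subtype.ext ((hbij (f v)).2.1 h1 h2 hπv)
    have : Function.Injective (fun v : π ⁻¹' {u} => (⟨f v, hfS v⟩ : S)) := by
      intro a b hab
      exact hinj (by simpa using congrArg Subtype.val hab)
    calc Nat.card (π ⁻¹' {u}) ≤ Nat.card S := Nat.card_le_card_of_injective _ this
      _ = S.ncard := (Nat.card_coe_set_eq S)
end

section
/- Let F be a graph without isolated vertices and with at least one vertex, and let G be a k-fold cover of F. Then γ_t(G) ≥ √(k·γ_t(F)), i.e., γ_t(G)² ≥ k·γ_t(F). -/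
/-- If `F` has no isolated vertices and at least one vertex, and `G` is a `k`-fold
cover of `F`, then `γ_t(G)² ≥ k·γ_t(F)`. -/
theorem sq_totalDominationNumber_ge {V W : Type*} [Fintype V] [Fintype W] [Nonempty W]
    (G : SimpleGraph V) (F : SimpleGraph W) (π : V → W) (k : ℕ)
    (hiso : ∀ u : W, ∃ w : W, F.Adj u w)
    (hπ : IsCover G F π) (hk : IsKFold π k) :
    k * totalDominationNumber F ≤ (totalDominationNumber G) ^ 2 := by
  obtain ⟨hsurj, hloc⟩ := hπ
  -- every vertex of G has a neighbor
  have hGiso : ∀ v : V, ∃ x : V, G.Adj v x := by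
    intro v
    obtain ⟨w, hw⟩ := hiso (π v)
    obtain ⟨x, hx, -⟩ := (hloc v).surjOn hw
    exact ⟨x, hx⟩
  -- the set defining γ_t(G) is nonempty
  have hne : {n | ∃ S : Set V, IsTotalDominatingSet G S ∧ S.ncard = n}.Nonempty := by
    refine ⟨(Set.univ : Set V).ncard, Set.univ, ?_, rfl⟩
    intro v
    obtain ⟨x, hx⟩ := hGiso v
    exact ⟨x, Set.mem_univ x, hx⟩
  obtain ⟨D, hD, hDcard⟩ := Nat.sInf_mem hne
  set g := totalDominationNumber G with hg
  -- Step 1 : γ_t(F) ≤ g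
  have h1 : totalDominationNumber F ≤ g := by
    have hmem : (π '' D).ncard ∈
        {n | ∃ S : Set W, IsTotalDominatingSet F S ∧ S.ncard = n} := by
      refine ⟨π '' D, ?_, rfl⟩
      intro u
      obtain ⟨v, rfl⟩ := hsurj u
      obtain ⟨d, hd, hadj⟩ := hD v
      exact ⟨π d, Set.mem_image_of_mem π hd, (hloc v).mapsTo hadj⟩
    calc totalDominationNumber F ≤ (π '' D).ncard := Nat.sInf_le hmem
      _ ≤ D.ncard := Set.ncard_image_le D.toFinite
      _ = g := hDcard
  -- Step 2 : k ≤ g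
  have h2 : k ≤ g := by
    obtain ⟨u₀⟩ := (inferInstance : Nonempty W)
    have hchoice : ∀ v : (π ⁻¹' {u₀} : Set V), ∃ d : D, G.Adj v d := by
      rintro ⟨v, hv⟩
      obtain ⟨d, hd, hadj⟩ := hD v
      exact ⟨⟨d, hd⟩, hadj⟩
    choose f hf using hchoice
    have hinj : Function.Injective f := by
      rintro ⟨v₁, hv₁⟩ ⟨v₂, hv₂⟩ hfe
      have h₁ : v₁ ∈ G.neighborSet (f ⟨v₁, hv₁⟩ : V) :=
        (G.adj_comm _ _).mp (hf ⟨v₁, hv₁⟩)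
      have h₂ : v₂ ∈ G.neighborSet (f ⟨v₁, hv₁⟩ : V) := by
        rw [hfe]; exact (G.adj_comm _ _).mp (hf ⟨v₂, hv₂⟩)
      have : π v₁ = π v₂ := by
        simp only [Set.mem_preimage, Set.mem_singleton_iff] at hv₁ hv₂
        rw [hv₁, hv₂]
      have := (hloc (f ⟨v₁, hv₁⟩ : V)).injOn h₁ h₂ this
      exact Subtype.ext this
    calc k = Nat.card (π ⁻¹' {u₀} : Set V) := (hk u₀).symm
      _ ≤ Nat.card D := Nat.card_le_card_of_injective f hinj
      _ = D.ncard := Nat.card_coe_set_eq D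
      _ = g := hDcard
  calc k * totalDominationNumber F ≤ g * g := Nat.mul_le_mul h2 h1
    _ = g ^ 2 := (sq g).symm
end

section
/- Let F and G be connected graphs and let G be a cover of F with covering projection π : V(G) → V(F). If S is a connected dominating set of G, then the image π(S) is a connected dominating set of F; consequently, γ_c(G) ≥ γ_c(F). -/
/-- The image of a connected dominating set under a covering projection between connected
graphs is a connected dominating set; consequently `γ_c(G) ≥ γ_c(F)`. -/
theorem image_connDominating_of_isCover {V W : Type*} [Fintype V] [Fintype W]
    (G : SimpleGraph V) (F : SimpleGraph W) (π : V → W)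
    (hG : G.Connected) (hF : F.Connected)
    (hπ : IsCover G F π) :
    (∀ S : Set V, IsConnDominatingSet G S → IsConnDominatingSet F (π '' S)) ∧
      connectedDominationNumber F ≤ connectedDominationNumber G := by
  have hadj : ∀ a b : V, G.Adj a b → F.Adj (π a) (π b) := fun a b hab =>
    (hπ.2 a).mapsTo hab
  have key : ∀ S : Set V, IsConnDominatingSet G S → IsConnDominatingSet F (π '' S) := by
    intro S hS
    constructor
    · intro w hw
      obtain ⟨v, rfl⟩ := hπ.1 w
      have hv : v ∉ S := fun h => hw ⟨v, h, rfl⟩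
      obtain ⟨u, hu, huv⟩ := hS.1 v hv
      exact ⟨π u, ⟨u, hu, rfl⟩, hadj v u huv⟩
    · exact hS.2.map ⟨fun v => ⟨π v.1, v.1, v.2, rfl⟩, fun h => hadj _ _ h⟩
        (by rintro ⟨w, v, hv, rfl⟩; exact ⟨⟨v, hv⟩, rfl⟩)
  refine ⟨key, ?_⟩
  have huniv : IsConnDominatingSet G Set.univ := by
    refine ⟨fun v hv => absurd (Set.mem_univ v) hv, ?_⟩
    exact ((SimpleGraph.induceUnivIso G).connected_iff).mpr hG
  have hne : {n | ∃ S : Set V, IsConnDominatingSet G S ∧ S.ncard = n}.Nonempty :=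
    ⟨_, Set.univ, huniv, rfl⟩
  obtain ⟨S, hS, hcard⟩ := Nat.sInf_mem hne
  calc connectedDominationNumber F ≤ (π '' S).ncard :=
        Nat.sInf_le ⟨π '' S, key S hS, rfl⟩
    _ ≤ S.ncard := Set.ncard_image_le S.toFinite
    _ = connectedDominationNumber G := hcard
end

section
/- Let F and G be connected graphs and let G be a k-fold cover of F. Then γ_c(G) ≤ k·(γ_c(F) + 2) − 2. -/
/-!
A minimum connected dominating set `S` of `F` lifts to the dominating set `π⁻¹ S` of `G`, of size
`k·γ_c(F)`. Lifting paths of `F[S]` shows that every component of `G[π⁻¹ S]` meets the fiber over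
a fixed vertex of `S`, so there are at most `k` of them. In a connected graph, some two components
of the subgraph induced by a dominating set are at distance at most 3, so they merge after adding
at most 2 vertices; after at most `k - 1` merges we have a connected dominating set of size at most
`k·γ_c(F) + 2(k - 1)`.
-/

open SimpleGraph

section

variable {V W : Type*}

theorem connectedDominationNumber_le_ncard {G : SimpleGraph V} {B : Set V}
    (hB : IsConnDominatingSet G B) : connectedDominationNumber G ≤ B.ncard :=
  Nat.sInf_le ⟨B, hB, rfl⟩

theorem SimpleGraph.Connected.exists_isConnDominatingSet_ncard_eq {F : SimpleGraph W}
    (hF : F.Connected) : ∃ S, IsConnDominatingSet F S ∧ S.ncard = connectedDominationNumber F :=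
  Nat.sInf_mem (s := {n | ∃ S, IsConnDominatingSet F S ∧ S.ncard = n}) ⟨_, Set.univ,
    ⟨fun v hv ↦ (hv (Set.mem_univ v)).elim, F.induceUnivIso.connected_iff.mpr hF⟩, rfl⟩

theorem SimpleGraph.Walk.reachable_induce_of_mem_support {G : SimpleGraph V} {s : Set V}
    {x y : V} (p : G.Walk x y) (hp : {v | v ∈ p.support} ⊆ s) {u v : s}
    (hu : (u : V) ∈ p.support) (hv : (v : V) ∈ p.support) : (G.induce s).Reachable u v :=
  (p.connected_induce_support.preconnected (⟨u, hu⟩ : {v | v ∈ p.support}) ⟨v, hv⟩).map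
    (induceHomOfLE G hp).toHom

theorem SimpleGraph.Walk.ncard_union_support_add_one_le [Finite V] {G : SimpleGraph V}
    {D : Set V} {x y : V} (hx : x ∈ D) (hy : y ∈ D) (hxy : x ≠ y) (p : G.Walk x y) :
    (D ∪ {v | v ∈ p.support}).ncard + 1 ≤ D.ncard + p.length := by
  classical
  set s := {v | v ∈ p.support}
  have hs : s.ncard ≤ p.length + 1 := by
    rw [show s = ↑p.support.toFinset by ext; simp [s], Set.ncard_coe_finset, ← p.length_support]
    exact p.support.toFinset_card_le
  have hinter : 2 ≤ (D ∩ s).ncard :=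
    Set.ncard_pair hxy ▸ Set.ncard_le_ncard (by simp [Set.insert_subset_iff, s, hx, hy])
  have := Set.ncard_union_add_ncard_inter D s
  omega

section Domination

variable {G : SimpleGraph V} {D : Set V}

theorem IsDominatingSet.mono {D' : Set V} (hD : IsDominatingSet G D) (h : D ⊆ D') :
    IsDominatingSet G D' := fun v hv ↦
  let ⟨u, hu, hvu⟩ := hD v fun hvD ↦ hv (h hvD)
  ⟨u, h hu, hvu⟩

theorem IsDominatingSet.exists_dist_le_one (hD : IsDominatingSet G D) (v : V) :
    ∃ w ∈ D, G.dist v w ≤ 1 := by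
  by_cases hv : v ∈ D
  · exact ⟨v, hv, by simp⟩
  · obtain ⟨w, hw, hvw⟩ := hD v hv
    exact ⟨w, hw, (dist_eq_one_iff_adj.mpr hvw).le⟩

theorem IsDominatingSet.nonempty [Nonempty V] (hD : IsDominatingSet G D) : D.Nonempty :=
  let ⟨w, hw, _⟩ := hD.exists_dist_le_one (Classical.arbitrary V)
  ⟨w, hw⟩

/-- If `d(x, y) > 3`, the dominator `w` of the vertex two steps along a shortest path from `x`
is within distance 3 of `x` and closer than `d(x, y)` to `y`, and it is separated from `x` or
from `y` in `G[D]`. -/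
theorem IsDominatingSet.exists_not_reachable_dist_le_three (hG : G.Connected)
    (hD : IsDominatingSet G D) {x y : D} (hxy : ¬(G.induce D).Reachable x y) :
    ∃ x' y' : D, ¬(G.induce D).Reachable x' y' ∧ G.dist x' y' ≤ 3 := by
  induction hd : G.dist x y using Nat.strong_induction_on generalizing x y with
  | _ d ih =>
  by_cases hd3 : d ≤ 3
  · exact ⟨x, y, hxy, hd ▸ hd3⟩
  obtain ⟨p, hp⟩ := hG.exists_walk_length_eq_dist x y
  obtain ⟨w, hwD, hw⟩ := hD.exists_dist_le_one (p.getVert 2)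
  by_cases hxw : (G.induce D).Reachable x ⟨w, hwD⟩
  · refine ih (G.dist w y) ?_ (fun h ↦ hxy (hxw.trans h)) rfl
    calc G.dist w y ≤ G.dist w (p.getVert 2) + G.dist (p.getVert 2) y := hG.dist_triangle
      _ ≤ 1 + (d - 2) := by
          gcongr
          · rwa [dist_comm]
          · exact (dist_le (p.drop 2)).trans (by simp [Walk.drop_length, hp, hd])
      _ < d := by omega
  · refine ⟨x, ⟨w, hwD⟩, hxw, ?_⟩
    calc G.dist x w ≤ G.dist x (p.getVert 2) + G.dist (p.getVert 2) w := hG.dist_triangle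
      _ ≤ 2 + 1 := by
          gcongr
          exact (dist_le (p.take 2)).trans (by simp [Walk.take_length])

theorem card_connectedComponent_induce_union_support_lt [Finite V] {x y : D}
    (hxy : ¬(G.induce D).Reachable x y) (p : G.Walk x y) :
    Nat.card (G.induce (D ∪ {v | v ∈ p.support})).ConnectedComponent <
      Nat.card (G.induce D).ConnectedComponent := by
  set D' := D ∪ {v | v ∈ p.support}
  let f := ConnectedComponent.map (induceHomOfLE G (Set.subset_union_left : D ⊆ D')).toHom
  have hsupp (v : D') (hv : (v : V) ∈ p.support) :
      (G.induce D').connectedComponentMk v = f (connectedComponentMk _ x) :=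
    ConnectedComponent.eq.mpr
      (p.reachable_induce_of_mem_support Set.subset_union_right hv p.start_mem_support)
  have := Fintype.ofFinite (G.induce D).ConnectedComponent
  have := Fintype.ofFinite (G.induce D').ConnectedComponent
  simp only [Nat.card_eq_fintype_card]
  refine Fintype.card_lt_of_surjective_not_injective f ?_ fun hf ↦ hxy ?_
  · refine ConnectedComponent.ind fun v ↦ ?_
    rcases v.2 with hv | hv
    · exact ⟨connectedComponentMk _ ⟨v, hv⟩, rfl⟩
    · exact ⟨_, (hsupp v hv).symm⟩
  · refine ConnectedComponent.eq.mp (hf ?_)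
    rw [← hsupp ⟨y, Or.inr p.end_mem_support⟩ p.end_mem_support]
    rfl

theorem IsDominatingSet.exists_isConnDominatingSet_ncard_le [Finite V] (hG : G.Connected)
    (hD : IsDominatingSet G D) :
    ∃ B, IsConnDominatingSet G B ∧
      B.ncard ≤ D.ncard + 2 * (Nat.card (G.induce D).ConnectedComponent - 1) := by
  induction hn : Nat.card (G.induce D).ConnectedComponent using Nat.strong_induction_on
    generalizing D with
  | _ n ih =>
  have := hG.nonempty
  have : Nonempty D := hD.nonempty.to_subtype
  by_cases hpre : (G.induce D).Preconnected
  · exact ⟨D, ⟨hD, ⟨hpre⟩⟩, by omega⟩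
  obtain ⟨x₀, y₀, hxy₀⟩ : ∃ x y : D, ¬(G.induce D).Reachable x y := by
    simpa [Preconnected] using hpre
  obtain ⟨x, y, hxy, hd⟩ := hD.exists_not_reachable_dist_le_three hG hxy₀
  obtain ⟨p, hp⟩ := hG.exists_walk_length_eq_dist x y
  have hne : (x : V) ≠ y := fun h ↦ hxy (Subtype.ext h ▸ .rfl)
  have hlt := card_connectedComponent_induce_union_support_lt hxy p
  have hcard := p.ncard_union_support_add_one_le x.2 y.2 hne
  have hpos : 0 < Nat.card (G.induce (D ∪ {v | v ∈ p.support})).ConnectedComponent :=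
    have : Nonempty ↥(D ∪ {v | v ∈ p.support}) := ⟨⟨x, Or.inl x.2⟩⟩
    Nat.card_pos
  obtain ⟨B, hB, hBcard⟩ := ih _ (hn ▸ hlt) (hD.mono Set.subset_union_left) rfl
  exact ⟨B, hB, by omega⟩

end Domination

section Cover

variable {G : SimpleGraph V} {F : SimpleGraph W} {π : V → W}

theorem IsCover.exists_adj_map_eq (hπ : IsCover G F π) {v : V} {u : W} (h : F.Adj (π v) u) :
    ∃ v', G.Adj v v' ∧ π v' = u :=
  (hπ.2 v).surjOn h

theorem IsCover.isDominatingSet_preimage (hπ : IsCover G F π) {S : Set W}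
    (hS : IsDominatingSet F S) : IsDominatingSet G (π ⁻¹' S) := fun v hv ↦
  let ⟨_, huS, hvu⟩ := hS (π v) hv
  let ⟨v', hvv', hv'⟩ := hπ.exists_adj_map_eq hvu
  ⟨v', by rwa [Set.mem_preimage, hv'], hvv'⟩

theorem IsCover.exists_reachable_induce_preimage (hπ : IsCover G F π) {S : Set W} {u w : S}
    (h : (F.induce S).Reachable u w) (v : π ⁻¹' S) (hv : π v = u) :
    ∃ v' : π ⁻¹' S, π v' = w ∧ (G.induce (π ⁻¹' S)).Reachable v v' := by
  obtain ⟨q⟩ := h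
  induction q generalizing v with
  | nil => exact ⟨v, hv, .rfl⟩
  | @cons u₀ u₁ _ hadj _ ih =>
    obtain ⟨v₁, hvv₁, hv₁⟩ := hπ.exists_adj_map_eq (by rw [hv]; exact hadj)
    obtain ⟨v', hv', hr⟩ := ih ⟨v₁, by simp [hv₁]⟩ hv₁
    exact ⟨v', hv', Adj.reachable (G := G.induce (π ⁻¹' S)) (v := ⟨v₁, _⟩) hvv₁ |>.trans hr⟩

theorem IsCover.card_connectedComponent_induce_preimage_le [Finite V] (hπ : IsCover G F π)
    {S : Set W} (hS : (F.induce S).Connected) {u : W} (hu : u ∈ S) :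
    Nat.card (G.induce (π ⁻¹' S)).ConnectedComponent ≤ Nat.card (π ⁻¹' {u}) := by
  refine Nat.card_le_card_of_surjective
    (fun x ↦ connectedComponentMk _ ⟨x, by rw [Set.mem_preimage, show π x = u from x.2]; exact hu⟩)
    (ConnectedComponent.ind fun v ↦ ?_)
  obtain ⟨v', hv', hr⟩ :=
    hπ.exists_reachable_induce_preimage (hS.preconnected ⟨π v, v.2⟩ ⟨u, hu⟩) v rfl
  exact ⟨⟨v', hv'⟩, (ConnectedComponent.eq.mpr hr).symm⟩

end Cover

theorem IsKFold.ncard_preimage [Finite V] {π : V → W} {k : ℕ} (hk : IsKFold π k) {S : Set W}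
    (hS : S.Finite) : (π ⁻¹' S).ncard = k * S.ncard := by
  rw [← Nat.card_coe_set_eq, ← hS.coe_toFinset, Finset.card_preimage_eq_sum_card_image_eq
    fun _ _ ↦ Set.toFinite _, Set.ncard_coe_finset]
  calc ∑ u ∈ hS.toFinset, Nat.card {v // π v = u} = ∑ _ ∈ hS.toFinset, k :=
        Finset.sum_congr rfl fun u _ ↦ hk u
    _ = k * hS.toFinset.card := by rw [Finset.sum_const, smul_eq_mul, mul_comm]

end

/-- If `G` and `F` are connected and `G` is a `k`-fold cover of `F`, then
`γ_c(G) ≤ k·(γ_c(F) + 2) − 2`. -/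
theorem connectedDominationNumber_le_of_isCover {V W : Type*} [Fintype V] [Fintype W]
    (G : SimpleGraph V) (F : SimpleGraph W) (π : V → W) (k : ℕ)
    (hG : G.Connected) (hF : F.Connected)
    (hπ : IsCover G F π) (hk : IsKFold π k) :
    connectedDominationNumber G ≤ k * (connectedDominationNumber F + 2) - 2 := by
  obtain ⟨S, ⟨hSdom, hSconn⟩, hScard⟩ := hF.exists_isConnDominatingSet_ncard_eq
  obtain ⟨⟨u, hu⟩⟩ := hSconn.nonempty
  obtain ⟨B, hB, hBcard⟩ :=
    (hπ.isDominatingSet_preimage hSdom).exists_isConnDominatingSet_ncard_le hG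
  have hcomp : Nat.card (G.induce (π ⁻¹' S)).ConnectedComponent ≤ k :=
    hk u ▸ hπ.card_connectedComponent_induce_preimage_le hSconn hu
  have hpre : (π ⁻¹' S).ncard = k * connectedDominationNumber F :=
    hScard ▸ hk.ncard_preimage S.toFinite
  obtain ⟨v, hv⟩ := hπ.1 u
  have : Nonempty (π ⁻¹' {u}) := ⟨⟨v, hv⟩⟩
  have hk₀ : 0 < k := hk u ▸ Nat.card_pos
  calc connectedDominationNumber G ≤ B.ncard := connectedDominationNumber_le_ncard hB
    _ ≤ k * connectedDominationNumber F + 2 * (k - 1) := by omega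
    _ = k * (connectedDominationNumber F + 2) - 2 := by rw [mul_add]; omega
end
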